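/- Let $n_1, m_2, m_3$ be integers $\ge 2$, let $h = \gcd(1-2n_1,\ 1-2m_2,\ 1-2m_3)$, and consider the $3\times 3$ integer matrix $\partial_2 = \begin{bmatrix} -(1-2m_2) & -(1-2m_3) & 0 \\ 1-2n_1 & 0 & -(1-2m_3) \\ 0 & 1-2n_1 & 1-2m_2 \end{bmatrix}$. Then $\det \partial_2 = 0$, the gcd of the entries of $\partial_2$ is $h$, and the gcd of all $2\times 2$ minors of $\partial_2$ is $h^2$. -/

import Mathlib

/-!
Write `a = 1 - 2n₁`, `b = 1 - 2m₂`, `c = 1 - 2m₃`. The entries of `∂₂` are `0, ±a, ±b, ±c` and its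
`2 × 2` minors are `0` and, up to sign, the six products `a², b², c², ab, ac, bc`. So the common divisors
of the entries are those of `a, b, c`, i.e. of `h`, and those of the minors are those of `h²`: one
direction because `h` divides `a, b, c`, the other because Bézout's identity `h = ax + by + cz`
writes `h²` as an integral combination of the six products.
-/

theorem Finset.gcd_eq_of_forall_dvd_iff {α ι : Type*} [CommMonoidWithZero α]
    [NormalizedGCDMonoid α] {s : Finset ι} {f : ι → α} {d : α} (hd : normalize d = d)
    (h : ∀ e, e ∣ d ↔ ∀ i ∈ s, e ∣ f i) : s.gcd f = d :=
  dvd_antisymm_of_normalize_eq Finset.normalize_gcd hd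
    ((h _).2 fun _ hi => Finset.gcd_dvd hi) (Finset.dvd_gcd_iff.2 ((h d).1 dvd_rfl))

namespace Int

theorem dvd_gcd_gcd_iff {a b c e : ℤ} :
    e ∣ (Int.gcd a (Int.gcd b c) : ℤ) ↔ e ∣ a ∧ e ∣ b ∧ e ∣ c := by
  simp only [Int.coe_gcd, _root_.dvd_gcd_iff]

theorem exists_gcd_gcd_eq_add_mul (a b c : ℤ) :
    ∃ x y z : ℤ, (Int.gcd a (Int.gcd b c) : ℤ) = a * x + b * y + c * z :=
  ⟨gcdA a (gcd b c), gcdB a (gcd b c) * gcdA b c, gcdB a (gcd b c) * gcdB b c, by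
    rw [gcd_eq_gcd_ab a, gcd_eq_gcd_ab b c]; ring⟩

theorem dvd_sq_gcd_gcd_iff {a b c e : ℤ} :
    e ∣ (Int.gcd a (Int.gcd b c) : ℤ) ^ 2 ↔
      e ∣ a * a ∧ e ∣ b * b ∧ e ∣ c * c ∧ e ∣ a * b ∧ e ∣ a * c ∧ e ∣ b * c := by
  constructor
  · intro he
    obtain ⟨ha, hb, hc⟩ := dvd_gcd_gcd_iff.1 (dvd_refl (Int.gcd a (Int.gcd b c) : ℤ))
    rw [sq] at he
    exact ⟨he.trans (mul_dvd_mul ha ha), he.trans (mul_dvd_mul hb hb), he.trans (mul_dvd_mul hc hc),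
      he.trans (mul_dvd_mul ha hb), he.trans (mul_dvd_mul ha hc), he.trans (mul_dvd_mul hb hc)⟩
  · rintro ⟨haa, hbb, hcc, hab, hac, hbc⟩
    obtain ⟨x, y, z, hg⟩ := exists_gcd_gcd_eq_add_mul a b c
    have expand : (a * x + b * y + c * z) ^ 2 = a * a * (x * x) + b * b * (y * y) + c * c * (z * z)
        + a * b * (2 * x * y) + a * c * (2 * x * z) + b * c * (2 * y * z) := by ring
    rw [hg, expand]
    apply_rules [dvd_add, Dvd.dvd.mul_right]

end Int

def boundaryMatrix {R : Type*} [Neg R] [Zero R] (a b c : R) : Matrix (Fin 3) (Fin 3) R :=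
  !![-b, -c, 0; a, 0, -c; 0, a, b]

section boundaryMatrix

variable {R : Type*} [CommRing R] (a b c e : R)

theorem det_boundaryMatrix : (boundaryMatrix a b c).det = 0 := by
  rw [Matrix.det_fin_three]
  simp only [boundaryMatrix, Matrix.of_apply, Matrix.cons_val', Matrix.cons_val_fin_one,
    Matrix.cons_val_zero, Matrix.cons_val_one, Matrix.cons_val]
  ring

theorem forall_dvd_boundaryMatrix_iff :
    (∀ p : Fin 3 × Fin 3, e ∣ boundaryMatrix a b c p.1 p.2) ↔ e ∣ a ∧ e ∣ b ∧ e ∣ c := by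
  simp only [boundaryMatrix, Matrix.of_apply, Matrix.cons_val', Matrix.cons_val_fin_one,
    Matrix.cons_val_zero, Matrix.cons_val_succ, Prod.forall, Fin.forall_fin_succ, forall_const,
    dvd_neg, dvd_zero, and_true, true_and]
  tauto

theorem forall_dvd_minor_boundaryMatrix_iff :
    (∀ q : (Fin 3 × Fin 3) × (Fin 3 × Fin 3),
        e ∣ boundaryMatrix a b c q.1.1 q.2.1 * boundaryMatrix a b c q.1.2 q.2.2
          - boundaryMatrix a b c q.1.1 q.2.2 * boundaryMatrix a b c q.1.2 q.2.1) ↔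
      e ∣ a * a ∧ e ∣ b * b ∧ e ∣ c * c ∧ e ∣ a * b ∧ e ∣ a * c ∧ e ∣ b * c := by
  simp only [boundaryMatrix, Matrix.of_apply, Matrix.cons_val', Matrix.cons_val_fin_one,
    Matrix.cons_val_zero, Matrix.cons_val_succ, Prod.forall, Fin.forall_fin_succ, forall_const,
    mul_comm, mul_zero, zero_mul, mul_neg, neg_mul, neg_neg, neg_zero, sub_self, sub_zero, zero_sub,
    sub_neg_eq_add, add_zero, zero_add, add_neg_cancel, neg_add_cancel, dvd_neg, dvd_zero,
    and_self, and_true, true_and]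
  tauto

end boundaryMatrix

open Finset in
theorem stmt_14_general (n₁ m₂ m₃ : ℤ)
    (h : ℕ) (hh : h = Int.gcd (1 - 2*n₁) (Int.gcd (1 - 2*m₂) (1 - 2*m₃)))
    (M : Matrix (Fin 3) (Fin 3) ℤ)
    (hM : M = !![-(1-2*m₂), -(1-2*m₃), 0;
                 1-2*n₁, 0, -(1-2*m₃);
                 0, 1-2*n₁, 1-2*m₂]) :
    M.det = 0 ∧
    Finset.univ.gcd (fun p : Fin 3 × Fin 3 => M p.1 p.2) = (h : ℤ) ∧
    Finset.univ.gcd (fun q : (Fin 3 × Fin 3) × (Fin 3 × Fin 3) =>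
      M q.1.1 q.2.1 * M q.1.2 q.2.2 - M q.1.1 q.2.2 * M q.1.2 q.2.1) = ((h : ℤ))^2 := by
  have hM' : M = boundaryMatrix (1 - 2 * n₁) (1 - 2 * m₂) (1 - 2 * m₃) := hM
  subst hM' hh
  refine ⟨det_boundaryMatrix _ _ _, ?_, ?_⟩
  · refine Finset.gcd_eq_of_forall_dvd_iff (Int.normalize_of_nonneg (by positivity)) fun e => ?_
    simpa only [Finset.mem_univ, true_imp_iff, Int.dvd_gcd_gcd_iff]
      using (forall_dvd_boundaryMatrix_iff _ _ _ e).symm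
  · refine Finset.gcd_eq_of_forall_dvd_iff (Int.normalize_of_nonneg (by positivity)) fun e => ?_
    simpa only [Finset.mem_univ, true_imp_iff, Int.dvd_sq_gcd_gcd_iff]
      using (forall_dvd_minor_boundaryMatrix_iff _ _ _ e).symm

open Finset in
theorem stmt_14 (n₁ m₂ m₃ : ℤ) (h₁ : 2 ≤ n₁) (h₂ : 2 ≤ m₂) (h₃ : 2 ≤ m₃)
    (h : ℕ) (hh : h = Int.gcd (1 - 2*n₁) (Int.gcd (1 - 2*m₂) (1 - 2*m₃)))
    (M : Matrix (Fin 3) (Fin 3) ℤ)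
    (hM : M = !![-(1-2*m₂), -(1-2*m₃), 0;
                 1-2*n₁, 0, -(1-2*m₃);
                 0, 1-2*n₁, 1-2*m₂]) :
    M.det = 0 ∧
    Finset.univ.gcd (fun p : Fin 3 × Fin 3 => M p.1 p.2) = (h : ℤ) ∧
    Finset.univ.gcd (fun q : (Fin 3 × Fin 3) × (Fin 3 × Fin 3) =>
      M q.1.1 q.2.1 * M q.1.2 q.2.2 - M q.1.1 q.2.2 * M q.1.2 q.2.1) = ((h : ℤ))^2 :=
  stmt_14_general n₁ m₂ m₃ h hh M hM
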